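/- Let 0 ≤ s' < s ≤ m. Suppose (𝒫,𝒬) is a basic 2-partition of 𝒥(0,s) whose rightmost maximal vertebrate range is (s',s), and the induced 2-partition of 𝒥(s',s) is (𝒞,𝒟) = (𝒥_≤(s',s), 𝒥_>(s',s)). Let (𝒫',𝒬') = (𝒫 ∩ 𝒥(0,s'), 𝒬 ∩ 𝒥(0,s')), let (ℰ,ℱ) = (𝒫 ∖ (𝒫' ∪ 𝒞), 𝒬 ∖ (𝒬' ∪ 𝒟)) (which is a 2-partition of 𝒦_{s'} ∖ 𝒦_s), let (p,q) be the pair of s-monotonic sequences encoding (𝒫,𝒬), and let (p',q') be the pair of s'-monotonic sequences encoding (𝒫',𝒬'). Then (p,q) extends (p',q') by (ℰ,ℱ). -/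

import Mathlib

/-- The open real interval corresponding to an integer pair `(a, b)`. -/
def iv (p : ℤ × ℤ) : Set ℝ := Set.Ioo (p.1 : ℝ) (p.2 : ℝ)

/-- Two integer-endpoint open intervals intersect (share a point). -/
def Meets (p q : ℤ × ℤ) : Prop := (iv p ∩ iv q).Nonempty

/-- A vertebrate family: distinct open intervals with integer endpoints contained in
`[0, m]`, containing the `m` unit intervals `(i-1, i)` for `1 ≤ i ≤ m`. -/
def Vertebrate (m : ℤ) (J : Finset (ℤ × ℤ)) : Prop :=
  (∀ p ∈ J, 0 ≤ p.1 ∧ p.1 < p.2 ∧ p.2 ≤ m) ∧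
  (∀ i : ℤ, 1 ≤ i → i ≤ m → ((i - 1, i) : ℤ × ℤ) ∈ J)

/-- `Bar v R S` (written `ℛ∣𝒮`): every interval in `R` intersects at most `v`
pairwise disjoint intervals of `S` other than itself. -/
def Bar (v : ℕ) (R S : Finset (ℤ × ℤ)) : Prop :=
  ∀ p ∈ R, ∀ T ⊆ S.erase p,
    ((T : Set (ℤ × ℤ)).Pairwise fun a b => ¬ Meets a b) →
    (∀ q ∈ T, Meets p q) → T.card ≤ v

/-- An (ordered) 2-partition of a family `S`. -/
def TwoPartition (P Q S : Finset (ℤ × ℤ)) : Prop := P ∪ Q = S ∧ Disjoint P Q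

/-- A good 2-partition: each part satisfies `𝒮∣𝒮`. -/
def GoodPartition (v : ℕ) (P Q S : Finset (ℤ × ℤ)) : Prop :=
  TwoPartition P Q S ∧ Bar v P P ∧ Bar v Q Q

/-- `Jsub S l r` = the subfamily of intervals of `S` contained in `(l, r)`. -/
def Jsub (S : Finset (ℤ × ℤ)) (l r : ℤ) : Finset (ℤ × ℤ) :=
  S.filter fun p => l ≤ p.1 ∧ p.2 ≤ r

/-- The subfamily of intervals of length at most `v`. -/
def Jle (v : ℕ) (S : Finset (ℤ × ℤ)) : Finset (ℤ × ℤ) := S.filter fun p => p.2 - p.1 ≤ (v : ℤ)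

/-- The subfamily of intervals of length greater than `v`. -/
def Jgt (v : ℕ) (S : Finset (ℤ × ℤ)) : Finset (ℤ × ℤ) := S.filter fun p => (v : ℤ) < p.2 - p.1

/-- `Ksub S s` = the subfamily of intervals `(a, b) ∈ S` with `a < s < b`. -/
def Ksub (S : Finset (ℤ × ℤ)) (s : ℤ) : Finset (ℤ × ℤ) := S.filter fun p => p.1 < s ∧ s < p.2

/-- `alphaF S l r` = maximum size of a subfamily of pairwise disjoint intervals of `S`
each of which intersects the interval `(l, r)`. -/
noncomputable def alphaF (S : Finset (ℤ × ℤ)) (l r : ℤ) : ℕ :=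
  sSup {k : ℕ | ∃ T ⊆ S, T.card = k ∧
    ((T : Set (ℤ × ℤ)).Pairwise fun a b => ¬ Meets a b) ∧ ∀ p ∈ T, Meets p (l, r)}

/-- `idx v R u s` = the maximum `i ∈ [0, s]` such that `u ≤ alphaF R i s ≤ v + 1`,
or `-1` if no such index exists. -/
noncomputable def idx (v : ℕ) (R : Finset (ℤ × ℤ)) (u : ℕ) (s : ℤ) : ℤ :=
  sSup (insert (-1) {i : ℤ | 0 ≤ i ∧ i ≤ s ∧ u ≤ alphaF R i s ∧ alphaF R i s ≤ v + 1})

/-- An `s`-monotonic sequence `r = ⟨r_0, …, r_{v+2}⟩`. -/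
def SMonotonic (v : ℕ) (s : ℤ) (r : ℕ → ℤ) : Prop :=
  r 0 = s ∧ r (v + 2) = -1 ∧ (∀ u ≤ v + 1, r (u + 1) ≤ r u) ∧
  ∀ u ≤ v + 1, (r (u + 1) = -1 ∧ r u = -1) ∨ r (u + 1) < r u

/-- An `s`-monotonic sequence `r` encodes `R ⊆ 𝒥(0,s)` if `r_u = i(R, u, s)` for all `u`. -/
def Encodes (v : ℕ) (r : ℕ → ℤ) (R : Finset (ℤ × ℤ)) (s : ℤ) : Prop :=
  ∀ u ≤ v + 2, r u = idx v R u s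

/-- `alphaSeq v r i` = the maximum `u ∈ [0, v+1]` with `i ≤ r u`. -/
noncomputable def alphaSeq (v : ℕ) (r : ℕ → ℤ) (i : ℤ) : ℕ :=
  sSup {u : ℕ | u ≤ v + 1 ∧ i ≤ r u}

/-- `(l, r)` is a vertebrate range for the 2-partition `(P, Q)` of `𝒥(0,s)`:
all backbone unit intervals contained in `(l, r)` lie in the same part. -/
def VertRange (P Q : Finset (ℤ × ℤ)) (s l r : ℤ) : Prop :=
  0 ≤ l ∧ l < r ∧ r ≤ s ∧
  ((∀ i : ℤ, l < i → i ≤ r → ((i - 1, i) : ℤ × ℤ) ∈ P) ∨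
   (∀ i : ℤ, l < i → i ≤ r → ((i - 1, i) : ℤ × ℤ) ∈ Q))

/-- A maximal vertebrate range. -/
def MaxVertRange (P Q : Finset (ℤ × ℤ)) (s l r : ℤ) : Prop :=
  VertRange P Q s l r ∧
  ∀ l' r', VertRange P Q s l' r' → l' ≤ l → r ≤ r' → l' = l ∧ r' = r

/-- A 2-partition `(P, Q)` of `𝒥(0,s)` is basic if for every maximal vertebrate range
`(l, r)` its induced 2-partition of `𝒥(l,r)` is `(𝒥_≤(l,r), 𝒥_>(l,r))` or the swap. -/
def Basic (v : ℕ) (J P Q : Finset (ℤ × ℤ)) (s : ℤ) : Prop :=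
  ∀ l r : ℤ, MaxVertRange P Q s l r →
    (P ∩ Jsub J l r = Jle v (Jsub J l r) ∧ Q ∩ Jsub J l r = Jgt v (Jsub J l r)) ∨
    (P ∩ Jsub J l r = Jgt v (Jsub J l r) ∧ Q ∩ Jsub J l r = Jle v (Jsub J l r))

/-- `(p, q)` (a pair of `s`-monotonic sequences) extends `(p', q')` (a pair of
`s'`-monotonic sequences) by the 2-partition `(E, F)` of `𝒦_{s'} ∖ 𝒦_s`. -/
def ExtendsBy (v : ℕ) (J : Finset (ℤ × ℤ)) (s' s : ℤ) (p q p' q' : ℕ → ℤ)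
    (E F : Finset (ℤ × ℤ)) : Prop :=
  let D := Jgt v (Jsub J s' s)
  let w := alphaF D s' s
  let w' := alphaF (F ∪ D) s' s
  let d := (s - s').toNat
  (∀ u : ℕ, 1 ≤ u → u ≤ min d (v + 1) → p u = s - (u : ℤ)) ∧
  (∀ u : ℕ, d < u → u ≤ v + 1 → p u = p' (u - d)) ∧
  (∀ u : ℕ, 1 ≤ u → u ≤ min w' (v + 1) → q u = idx v (F ∪ D) u s) ∧
  (∀ u : ℕ, w' < u → u ≤ v + 1 → q u = q' (u - w))

/-- The dynamic-programming predicate `Y(s, p, q, 𝒜, ℬ)`. -/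
def Ypred (v : ℕ) (J : Finset (ℤ × ℤ)) (s : ℤ) (p q : ℕ → ℤ)
    (A B : Finset (ℤ × ℤ)) : Prop :=
  ∃ P Q : Finset (ℤ × ℤ), TwoPartition P Q (Jsub J 0 s) ∧
    Bar v P P ∧ Bar v Q Q ∧ Basic v J P Q s ∧
    Encodes v p P s ∧ Encodes v q Q s ∧
    Bar v P (P ∪ A) ∧ Bar v Q (Q ∪ B) ∧
    (0 < s → ((s - 1, s) : ℤ × ℤ) ∈ P)

/-- Two intervals overlap significantly: their intersection has length at least `2v+1`. -/
def SigOverlap (v : ℕ) (p q : ℤ × ℤ) : Prop :=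
  (2 * (v : ℤ) + 1) ≤ min p.2 q.2 - max p.1 q.1

/-- The significant-overlap graph `H` on a family `J`. -/
def Hgraph (v : ℕ) (J : Finset (ℤ × ℤ)) : SimpleGraph {p : ℤ × ℤ // p ∈ J} :=
  SimpleGraph.fromRel fun p q => SigOverlap v p.1 q.1


section Helpers

lemma meets_iff' (p q : ℤ × ℤ) :
    Meets p q ↔ p.1 < p.2 ∧ q.1 < q.2 ∧ p.1 < q.2 ∧ q.1 < p.2 := by
  unfold Meets iv
  rw [Set.Ioo_inter_Ioo, Set.nonempty_Ioo, max_lt_iff, lt_min_iff, lt_min_iff]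
  simp only [Int.cast_lt]
  omega

lemma meets_symm {p q : ℤ × ℤ} (h : Meets p q) : Meets q p := by
  rw [meets_iff'] at h ⊢; omega

/-- A "good" family witnessing a lower bound for `alphaF`. -/
def Good (S : Finset (ℤ × ℤ)) (l r : ℤ) (T : Finset (ℤ × ℤ)) : Prop :=
  T ⊆ S ∧ ((T : Set (ℤ × ℤ)).Pairwise fun a b => ¬ Meets a b) ∧ ∀ p ∈ T, Meets p (l, r)

lemma alphaF_bdd (S : Finset (ℤ × ℤ)) (l r : ℤ) :
    BddAbove {k : ℕ | ∃ T ⊆ S, T.card = k ∧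
      ((T : Set (ℤ × ℤ)).Pairwise fun a b => ¬ Meets a b) ∧ ∀ p ∈ T, Meets p (l, r)} := by
  refine ⟨S.card, fun k hk => ?_⟩
  obtain ⟨T, hTS, hcard, -, -⟩ := hk
  exact hcard ▸ Finset.card_le_card hTS

lemma alphaF_ne (S : Finset (ℤ × ℤ)) (l r : ℤ) :
    Set.Nonempty {k : ℕ | ∃ T ⊆ S, T.card = k ∧
      ((T : Set (ℤ × ℤ)).Pairwise fun a b => ¬ Meets a b) ∧ ∀ p ∈ T, Meets p (l, r)} :=
  ⟨0, ∅, Finset.empty_subset _, by simp, by simp, by simp⟩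

lemma le_alphaF {S : Finset (ℤ × ℤ)} {l r : ℤ} {T : Finset (ℤ × ℤ)} (hT : Good S l r T) :
    T.card ≤ alphaF S l r :=
  le_csSup (alphaF_bdd S l r) ⟨T, hT.1, rfl, hT.2.1, hT.2.2⟩

lemma alphaF_le {S : Finset (ℤ × ℤ)} {l r : ℤ} {n : ℕ}
    (h : ∀ T, Good S l r T → T.card ≤ n) : alphaF S l r ≤ n := by
  refine csSup_le (alphaF_ne S l r) fun k hk => ?_
  obtain ⟨T, hTS, hcard, hpw, hm⟩ := hk
  exact hcard ▸ h T ⟨hTS, hpw, hm⟩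

lemma exists_good (S : Finset (ℤ × ℤ)) (l r : ℤ) :
    ∃ T, Good S l r T ∧ T.card = alphaF S l r := by
  have := Nat.sSup_mem (alphaF_ne S l r) (alphaF_bdd S l r)
  obtain ⟨T, hTS, hcard, hpw, hm⟩ := this
  exact ⟨T, ⟨hTS, hpw, hm⟩, hcard⟩

lemma alphaF_mono {S S' : Finset (ℤ × ℤ)} (h : S ⊆ S') (l r : ℤ) :
    alphaF S l r ≤ alphaF S' l r :=
  alphaF_le fun T hT => le_alphaF ⟨hT.1.trans h, hT.2⟩

lemma alphaF_anti {S : Finset (ℤ × ℤ)} {l l' r : ℤ} (h : l ≤ l') :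
    alphaF S l' r ≤ alphaF S l r := by
  refine alphaF_le fun T hT => le_alphaF ⟨hT.1, hT.2.1, fun p hp => ?_⟩
  have := hT.2.2 p hp
  rw [meets_iff'] at this ⊢
  simp only at this ⊢
  omega

lemma alphaF_of_le {S : Finset (ℤ × ℤ)} {l r : ℤ} (h : r ≤ l) : alphaF S l r = 0 := by
  refine Nat.le_zero.mp (alphaF_le fun T hT => ?_)
  have : T = ∅ := by
    refine Finset.eq_empty_of_forall_notMem fun p hp => ?_
    have := hT.2.2 p hp
    rw [meets_iff'] at this
    simp only at this
    omega
  simp [this]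

lemma alphaF_empty (l r : ℤ) : alphaF ∅ l r = 0 := by
  refine Nat.le_zero.mp (alphaF_le fun T hT => ?_)
  have : T = ∅ := Finset.subset_empty.mp hT.1
  simp [this]

lemma alphaF_step (S : Finset (ℤ × ℤ)) (i s : ℤ) :
    alphaF S i s ≤ alphaF S (i + 1) s + 1 := by
  classical
  obtain ⟨T, hT, hcard⟩ := exists_good S i s
  rw [← hcard]
  have hsplit := Finset.card_filter_add_card_filter_not
    (s := T) (p := fun p => i + 1 < p.2 ∧ i + 1 < s)
  set T1 := T.filter (fun p => i + 1 < p.2 ∧ i + 1 < s) with hT1def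
  set T2 := T.filter (fun p => ¬ (i + 1 < p.2 ∧ i + 1 < s)) with hT2def
  have h1 : T1.card ≤ alphaF S (i + 1) s := by
    refine le_alphaF ⟨(Finset.filter_subset _ _).trans hT.1, ?_, ?_⟩
    · exact hT.2.1.mono (fun x hx => Finset.mem_coe.mpr
        (Finset.filter_subset _ _ (Finset.mem_coe.mp hx)))
    · intro p hp
      obtain ⟨hpT, hc⟩ := Finset.mem_filter.mp hp
      have := hT.2.2 p hpT
      rw [meets_iff'] at this ⊢
      simp only at this ⊢
      omega
  have h2 : T2.card ≤ 1 := by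
    refine Finset.card_le_one.mpr fun a ha b hb => ?_
    by_contra hab
    obtain ⟨haT, hca⟩ := Finset.mem_filter.mp ha
    obtain ⟨hbT, hcb⟩ := Finset.mem_filter.mp hb
    have hma := hT.2.2 a haT
    have hmb := hT.2.2 b hbT
    have hnm := hT.2.1 (Finset.mem_coe.mpr haT) (Finset.mem_coe.mpr hbT) hab
    rw [meets_iff'] at hma hmb
    simp only [meets_iff'] at hnm
    simp only at hma hmb hca hcb
    omega
  omega

lemma alphaF_split {S : Finset (ℤ × ℤ)} {s : ℤ} (hS : ∀ p ∈ S, p.1 < p.2 ∧ p.2 ≤ s)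
    {t : ℤ} (ht : t ≤ s) (i : ℤ) :
    alphaF S i s ≤ alphaF (S.filter fun p => p.2 ≤ t) i t + (s - t).toNat := by
  classical
  obtain ⟨T, hT, hcard⟩ := exists_good S i s
  rw [← hcard]
  have hsplit := Finset.card_filter_add_card_filter_not
    (s := T) (p := fun p => p.2 ≤ t)
  set T1 := T.filter (fun p => p.2 ≤ t) with hT1def
  set T2 := T.filter (fun p => ¬ p.2 ≤ t) with hT2def
  have h1 : T1.card ≤ alphaF (S.filter fun p => p.2 ≤ t) i t := by
    refine le_alphaF ⟨?_, ?_, ?_⟩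
    · intro p hp
      obtain ⟨hpT, hc⟩ := Finset.mem_filter.mp hp
      exact Finset.mem_filter.mpr ⟨hT.1 hpT, hc⟩
    · exact hT.2.1.mono (fun x hx => Finset.mem_coe.mpr
        (Finset.filter_subset _ _ (Finset.mem_coe.mp hx)))
    · intro p hp
      obtain ⟨hpT, hc⟩ := Finset.mem_filter.mp hp
      have := hT.2.2 p hpT
      rw [meets_iff'] at this ⊢
      simp only at this ⊢
      omega
  have h2 : T2.card ≤ (s - t).toNat := by
    have hcount : T2.card ≤ (Finset.Ico t s).card := by
      refine Finset.card_le_card_of_injOn (fun p => max p.1 t) ?_ ?_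
      · intro p hp
        obtain ⟨hpT, hc⟩ := Finset.mem_filter.mp hp
        obtain ⟨h1', h2'⟩ := hS p (hT.1 hpT)
        rw [Finset.mem_coe, Finset.mem_Ico]
        constructor
        · exact le_max_right _ _
        · exact max_lt (by omega) (by omega)
      · intro a ha b hb hab
        by_contra hne
        obtain ⟨haT, hca⟩ := Finset.mem_filter.mp (Finset.mem_coe.mp ha)
        obtain ⟨hbT, hcb⟩ := Finset.mem_filter.mp (Finset.mem_coe.mp hb)
        obtain ⟨ha1, ha2⟩ := hS a (hT.1 haT)
        obtain ⟨hb1, hb2⟩ := hS b (hT.1 hbT)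
        have hnm := hT.2.1 (Finset.mem_coe.mpr haT) (Finset.mem_coe.mpr hbT) hne
        simp only at hab
        simp only [meets_iff'] at hnm
        omega
    rwa [Int.card_Ico] at hcount
  omega

lemma alphaF_le_slots {S : Finset (ℤ × ℤ)} {s : ℤ} (hS : ∀ p ∈ S, p.1 < p.2 ∧ p.2 ≤ s)
    (i : ℤ) : alphaF S i s ≤ (s - i).toNat := by
  rcases le_or_gt i s with h | h
  · simpa [alphaF_of_le (le_refl i)] using alphaF_split hS h i
  · simp [alphaF_of_le h.le]

lemma idx_eq {v u : ℕ} {R : Finset (ℤ × ℤ)} {s i₀ : ℤ}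
    (h1 : 0 ≤ i₀) (h2 : i₀ ≤ s) (h3 : u ≤ alphaF R i₀ s) (h4 : alphaF R i₀ s ≤ v + 1)
    (h5 : ∀ j : ℤ, i₀ < j → j ≤ s → alphaF R j s < u) :
    idx v R u s = i₀ := by
  unfold idx
  apply le_antisymm
  · refine csSup_le ⟨-1, Set.mem_insert _ _⟩ fun x hx => ?_
    rcases hx with hx | hx
    · omega
    · obtain ⟨hx0, hxs, hxu, -⟩ := hx
      by_contra hlt
      exact absurd hxu (Nat.not_le.mpr (h5 x (by omega) hxs))
  · refine le_csSup ⟨s, fun x hx => ?_⟩ (Set.mem_insert_of_mem _ ⟨h1, h2, h3, h4⟩)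
    rcases hx with hx | hx
    · omega
    · exact hx.2.1

lemma idx_neg {v u : ℕ} {R : Finset (ℤ × ℤ)} {s : ℤ}
    (h : ∀ j : ℤ, 0 ≤ j → j ≤ s → alphaF R j s < u) :
    idx v R u s = -1 := by
  unfold idx
  have hset : (insert (-1) {i : ℤ | 0 ≤ i ∧ i ≤ s ∧ u ≤ alphaF R i s ∧ alphaF R i s ≤ v + 1})
      = {-1} := by
    ext x
    simp only [Set.mem_insert_iff, Set.mem_singleton_iff, Set.mem_setOf_eq]
    constructor
    · rintro (hx | ⟨hx0, hxs, hxu, -⟩)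
      · exact hx
      · exact absurd hxu (Nat.not_le.mpr (h x hx0 hxs))
    · intro hx; exact Or.inl hx
  rw [hset, csSup_singleton]

lemma exists_crit {u : ℕ} {R : Finset (ℤ × ℤ)} {s i₁ : ℤ}
    (hu : 1 ≤ u) (hi₁s : i₁ ≤ s) (h : u ≤ alphaF R i₁ s) :
    ∃ i₀ : ℤ, i₁ ≤ i₀ ∧ i₀ < s ∧ alphaF R i₀ s = u ∧
      ∀ j : ℤ, i₀ < j → alphaF R j s < u := by
  classical
  set Fs := (Finset.Icc i₁ s).filter (fun i => u ≤ alphaF R i s) with hFs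
  have hne : Fs.Nonempty := ⟨i₁, Finset.mem_filter.mpr ⟨Finset.mem_Icc.mpr ⟨le_refl _, hi₁s⟩, h⟩⟩
  set i₀ := Fs.max' hne with hi₀
  have hmem := Fs.max'_mem hne
  obtain ⟨hIcc, hα⟩ := Finset.mem_filter.mp hmem
  rw [Finset.mem_Icc] at hIcc
  have hgt : ∀ j : ℤ, i₀ < j → alphaF R j s < u := by
    intro j hj
    rcases le_or_gt j s with hjs | hjs
    · by_contra hc
      have hjF : j ∈ Fs := Finset.mem_filter.mpr
        ⟨Finset.mem_Icc.mpr ⟨by omega, hjs⟩, Nat.not_lt.mp hc⟩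
      have := Fs.le_max' j hjF
      omega
    · rw [alphaF_of_le hjs.le]; omega
  have hs0 : alphaF R s s = 0 := alphaF_of_le le_rfl
  have hlt : i₀ < s := by
    rcases eq_or_lt_of_le hIcc.2 with he | hl
    · rw [he] at hα; omega
    · exact hl
  have heq : alphaF R i₀ s = u := by
    have hα' : u ≤ alphaF R i₀ s := by rw [hi₀]; exact hα
    have hstep := alphaF_step R i₀ s
    have := hgt (i₀ + 1) (by omega)
    omega
  exact ⟨i₀, hIcc.1, hlt, heq, hgt⟩

lemma pairwise_union {T U : Finset (ℤ × ℤ)}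
    (hT : ((T : Set (ℤ × ℤ))).Pairwise fun a b => ¬ Meets a b)
    (hU : ((U : Set (ℤ × ℤ))).Pairwise fun a b => ¬ Meets a b)
    (h : ∀ t ∈ T, ∀ u ∈ U, ¬ Meets t u) :
    ((↑(T ∪ U) : Set (ℤ × ℤ))).Pairwise fun a b => ¬ Meets a b := by
  rw [Finset.coe_union]
  intro a ha b hb hab
  rcases ha with ha | ha <;> rcases hb with hb | hb
  · exact hT ha hb hab
  · exact h a (Finset.mem_coe.mp ha) b (Finset.mem_coe.mp hb)
  · exact fun hm => h b (Finset.mem_coe.mp hb) a (Finset.mem_coe.mp ha) (meets_symm hm)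
  · exact hU ha hb hab

lemma units_le_alphaF {P : Finset (ℤ × ℤ)} {l s : ℤ}
    (hmem : ∀ t : ℤ, l ≤ t → t < s → ((t, t + 1) : ℤ × ℤ) ∈ P) :
    (s - l).toNat ≤ alphaF P l s := by
  classical
  set U := (Finset.Ico l s).image (fun t : ℤ => ((t, t + 1) : ℤ × ℤ)) with hU
  have hinj : Function.Injective (fun t : ℤ => ((t, t + 1) : ℤ × ℤ)) := by
    intro x y h; simpa using congrArg Prod.fst h
  have hcard : U.card = (s - l).toNat := by
    rw [hU, Finset.card_image_of_injective _ hinj, Int.card_Ico]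
  have hle : U.card ≤ alphaF P l s := by
    refine le_alphaF ⟨?_, ?_, ?_⟩
    · intro x hx
      obtain ⟨t, ht, rfl⟩ := Finset.mem_image.mp hx
      rw [Finset.mem_Ico] at ht
      exact hmem t ht.1 ht.2
    · intro a ha b hb hab
      obtain ⟨t, ht, rfl⟩ := Finset.mem_image.mp (Finset.mem_coe.mp ha)
      obtain ⟨t', ht', rfl⟩ := Finset.mem_image.mp (Finset.mem_coe.mp hb)
      have htt : t ≠ t' := fun hc => hab (by rw [hc])
      rw [meets_iff']
      simp only
      omega
    · intro x hx
      obtain ⟨t, ht, rfl⟩ := Finset.mem_image.mp hx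
      rw [Finset.mem_Ico] at ht
      rw [meets_iff']
      simp only
      omega
  omega

end Helpers

/-- Lemma (ef): let `0 ≤ s' < s ≤ m` and let `(P, Q)` be a basic 2-partition of
`J(0,s)` whose rightmost maximal vertebrate range is `(s', s)`, inducing the simple
2-partition `(C, D) = (J_≤(s',s), J_>(s',s))` of `J(s',s)`. With
`(P', Q') = (P ∩ J(0,s'), Q ∩ J(0,s'))` and
`(E, F) = (P ∖ (P' ∪ C), Q ∖ (Q' ∪ D))`, if `(p, q)` encodes `(P, Q)` and
`(p', q')` encodes `(P', Q')`, then `(p, q)` extends `(p', q')` by `(E, F)`. -/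
theorem encoding_extends
    (v : ℕ) (hv : 1 ≤ v) (m : ℤ) (hm : 1 ≤ m)
    (J : Finset (ℤ × ℤ)) (hJ : Vertebrate m J)
    (s' s : ℤ) (hs' : 0 ≤ s') (hss : s' < s) (hsm : s ≤ m)
    (P Q : Finset (ℤ × ℤ)) (hpart : TwoPartition P Q (Jsub J 0 s))
    (hbasic : Basic v J P Q s)
    (hmax : MaxVertRange P Q s s' s)
    (hC : P ∩ Jsub J s' s = Jle v (Jsub J s' s))
    (hD : Q ∩ Jsub J s' s = Jgt v (Jsub J s' s))
    (p q p' q' : ℕ → ℤ)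
    (hp : SMonotonic v s p) (hq : SMonotonic v s q)
    (hpe : Encodes v p P s) (hqe : Encodes v q Q s)
    (hp' : SMonotonic v s' p') (hq' : SMonotonic v s' q')
    (hpe' : Encodes v p' (P ∩ Jsub J 0 s') s') (hqe' : Encodes v q' (Q ∩ Jsub J 0 s') s') :
    ExtendsBy v J s' s p q p' q'
      (P \ ((P ∩ Jsub J 0 s') ∪ Jle v (Jsub J s' s)))
      (Q \ ((Q ∩ Jsub J 0 s') ∪ Jgt v (Jsub J s' s))) := by
  classical
  obtain ⟨hPQ, hdisj⟩ := hpart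
  -- abbreviations
  set D := Jgt v (Jsub J s' s) with hDdef
  set Q1 := Q ∩ Jsub J 0 s' with hQ1def
  set P1 := P ∩ Jsub J 0 s' with hP1def
  set F := Q \ (Q1 ∪ D) with hFdef
  set d := (s - s').toNat with hddef
  have hdd : (d : ℤ) = s - s' := by rw [hddef]; omega
  -- element bounds
  have hPel : ∀ x ∈ P, 0 ≤ x.1 ∧ x.1 < x.2 ∧ x.2 ≤ s := by
    intro x hx
    have hxJ : x ∈ Jsub J 0 s := hPQ ▸ Finset.mem_union_left _ hx
    obtain ⟨hxJ', hx0, hxs⟩ := Finset.mem_filter.mp hxJ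
    exact ⟨hx0, (hJ.1 x hxJ').2.1, hxs⟩
  have hQel : ∀ x ∈ Q, 0 ≤ x.1 ∧ x.1 < x.2 ∧ x.2 ≤ s := by
    intro x hx
    have hxJ : x ∈ Jsub J 0 s := hPQ ▸ Finset.mem_union_right _ hx
    obtain ⟨hxJ', hx0, hxs⟩ := Finset.mem_filter.mp hxJ
    exact ⟨hx0, (hJ.1 x hxJ').2.1, hxs⟩
  have hPJ : P ⊆ J := by
    intro x hx
    exact Finset.filter_subset _ _ (hPQ ▸ Finset.mem_union_left _ hx)
  have hQJ : Q ⊆ J := by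
    intro x hx
    exact Finset.filter_subset _ _ (hPQ ▸ Finset.mem_union_right _ hx)
  -- filter characterizations
  have hP1eq : P1 = P.filter (fun x => x.2 ≤ s') := by
    rw [hP1def]
    ext x
    simp only [Finset.mem_inter, Finset.mem_filter, Jsub]
    constructor
    · rintro ⟨hxP, -, -, h2⟩; exact ⟨hxP, h2⟩
    · rintro ⟨hxP, h2⟩; exact ⟨hxP, hPJ hxP, (hPel x hxP).1, h2⟩
  have hQ1eq : Q1 = Q.filter (fun x => x.2 ≤ s') := by
    rw [hQ1def]
    ext x
    simp only [Finset.mem_inter, Finset.mem_filter, Jsub]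
    constructor
    · rintro ⟨hxQ, -, -, h2⟩; exact ⟨hxQ, h2⟩
    · rintro ⟨hxQ, h2⟩; exact ⟨hxQ, hQJ hxQ, (hQel x hxQ).1, h2⟩
  have hDQ : D ⊆ Q := by rw [← hD]; exact Finset.inter_subset_left
  have hFQ : F ⊆ Q := Finset.sdiff_subset
  have hFDQ : F ∪ D ⊆ Q := Finset.union_subset hFQ hDQ
  have hDel : ∀ x ∈ D, s' ≤ x.1 ∧ x.1 < x.2 ∧ x.2 ≤ s := by
    intro x hx
    rw [hDdef] at hx
    obtain ⟨hxJ, -⟩ := Finset.mem_filter.mp hx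
    obtain ⟨hxJ', h1, h2⟩ := Finset.mem_filter.mp hxJ
    exact ⟨h1, (hJ.1 x hxJ').2.1, h2⟩
  have hFel : ∀ x ∈ F, 0 ≤ x.1 ∧ x.1 < s' ∧ s' < x.2 ∧ x.2 ≤ s := by
    intro x hx
    rw [hFdef] at hx
    obtain ⟨hxQ, hxn⟩ := Finset.mem_sdiff.mp hx
    rw [Finset.mem_union] at hxn
    push_neg at hxn
    obtain ⟨hnQ1, hnD⟩ := hxn
    obtain ⟨hx0, hxlt, hxs⟩ := hQel x hxQ
    have h2 : s' < x.2 := by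
      by_contra hc
      exact hnQ1 (by rw [hQ1eq]; exact Finset.mem_filter.mpr ⟨hxQ, by omega⟩)
    have h1 : x.1 < s' := by
      by_contra hc
      refine hnD ?_
      rw [← hD]
      exact Finset.mem_inter.mpr ⟨hxQ, Finset.mem_filter.mpr ⟨hQJ hxQ, by omega, hxs⟩⟩
    exact ⟨hx0, h1, h2, hxs⟩
  have hQdecomp : ∀ x ∈ Q, x.2 ≤ s' ∨ x ∈ F ∪ D := by
    intro x hx
    by_cases hxF : x ∈ F ∪ D
    · exact Or.inr hxF
    · rw [Finset.mem_union] at hxF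
      push_neg at hxF
      have hxQ1 : x ∈ Q1 ∪ D := by
        by_contra hc
        exact hxF.1 (by rw [hFdef]; exact Finset.mem_sdiff.mpr ⟨hx, hc⟩)
      rcases Finset.mem_union.mp hxQ1 with h | h
      · rw [hQ1eq] at h
        exact Or.inl (Finset.mem_filter.mp h).2
      · exact absurd h hxF.2
  -- unit intervals in (s', s) belong to P
  have hunitsP : ∀ t : ℤ, s' ≤ t → t < s → ((t, t + 1) : ℤ × ℤ) ∈ P := by
    intro t ht1 ht2
    have hmemJ : ((t, t + 1) : ℤ × ℤ) ∈ J := by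
      have := hJ.2 (t + 1) (by omega) (by omega)
      simpa using this
    have hmemC : ((t, t + 1) : ℤ × ℤ) ∈ Jle v (Jsub J s' s) := by
      refine Finset.mem_filter.mpr ⟨Finset.mem_filter.mpr ⟨hmemJ, by simp [ht1], by simp; omega⟩, ?_⟩
      simp
      omega
    rw [← hC] at hmemC
    exact (Finset.mem_inter.mp hmemC).1
  -- the unit interval left of s' belongs to Q (by maximality)
  have hQunit : 1 ≤ s' → ((s' - 1, s') : ℤ × ℤ) ∈ Q := by
    intro hs1
    by_contra hc
    have hmemJ : ((s' - 1, s') : ℤ × ℤ) ∈ Jsub J 0 s := by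
      refine Finset.mem_filter.mpr ⟨hJ.2 s' (by omega) (by omega), by constructor <;> omega⟩
    have hmemP : ((s' - 1, s') : ℤ × ℤ) ∈ P := by
      rcases Finset.mem_union.mp (hPQ ▸ hmemJ : ((s' - 1, s') : ℤ × ℤ) ∈ P ∪ Q) with h | h
      · exact h
      · exact absurd h hc
    have hvr : VertRange P Q s (s' - 1) s := by
      refine ⟨by omega, by omega, le_refl _, Or.inl fun i hi1 hi2 => ?_⟩
      rcases eq_or_lt_of_le (Int.add_one_le_of_lt hi1) with he | hl
      · have hie : i = s' := by omega
        subst hie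
        simpa using hmemP
      · have := hunitsP (i - 1) (by omega) (by omega)
        simpa using this
    have := (hmax.2 (s' - 1) s hvr (by omega) (le_refl _)).1
    omega
  -- alpha equalities
  have hPkey : ∀ i : ℤ, i ≤ s' → alphaF P i s = alphaF P1 i s' + d := by
    intro i hi
    have hPS : ∀ x ∈ P, x.1 < x.2 ∧ x.2 ≤ s := fun x hx => ⟨(hPel x hx).2.1, (hPel x hx).2.2⟩
    apply le_antisymm
    · have hsp := alphaF_split hPS (le_of_lt hss) i
      rw [← hP1eq] at hsp
      omega
    · obtain ⟨T', hT', hc'⟩ := exists_good P1 i s'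
      set U := (Finset.Ico s' s).image (fun t : ℤ => ((t, t + 1) : ℤ × ℤ)) with hUdef
      have hinj : Function.Injective (fun t : ℤ => ((t, t + 1) : ℤ × ℤ)) := by
        intro x y h; simpa using congrArg Prod.fst h
      have hUcard : U.card = d := by
        rw [hUdef, Finset.card_image_of_injective _ hinj, Int.card_Ico]
      have hUel : ∀ x ∈ U, s' ≤ x.1 ∧ x.2 = x.1 + 1 ∧ x.1 < s := by
        intro x hx
        obtain ⟨t, ht, rfl⟩ := Finset.mem_image.mp hx
        rw [Finset.mem_Ico] at ht
        exact ⟨ht.1, rfl, ht.2⟩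
      have hT'el : ∀ x ∈ T', x ∈ P ∧ x.1 < x.2 ∧ x.2 ≤ s' := by
        intro x hx
        have hmem := hT'.1 hx
        rw [hP1eq] at hmem
        obtain ⟨hxP, hx2⟩ := Finset.mem_filter.mp hmem
        exact ⟨hxP, (hPel x hxP).2.1, hx2⟩
      have hdisjTU : Disjoint T' U := by
        rw [Finset.disjoint_left]
        intro x hx1 hx2
        have h1 := (hT'el x hx1).2.2
        have h2 := hUel x hx2
        omega
      have hgood : Good P i s (T' ∪ U) := by
        refine ⟨?_, ?_, ?_⟩
        · refine Finset.union_subset (fun x hx => (hT'el x hx).1) (fun x hx => ?_)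
          obtain ⟨t, ht, rfl⟩ := Finset.mem_image.mp hx
          rw [Finset.mem_Ico] at ht
          exact hunitsP t ht.1 ht.2
        · refine pairwise_union hT'.2.1 ?_ ?_
          · intro a ha b hb hab
            obtain ⟨t, ht, rfl⟩ := Finset.mem_image.mp (Finset.mem_coe.mp ha)
            obtain ⟨t', ht', rfl⟩ := Finset.mem_image.mp (Finset.mem_coe.mp hb)
            have htt : t ≠ t' := fun hc => hab (by rw [hc])
            rw [meets_iff']; simp only; omega
          · intro a ha b hb hm
            obtain ⟨-, -, ha2⟩ := hT'el a ha
            obtain ⟨hb1, hb2, -⟩ := hUel b hb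
            rw [meets_iff'] at hm
            omega
        · intro x hx
          rcases Finset.mem_union.mp hx with hx | hx
          · have hm := hT'.2.2 x hx
            obtain ⟨-, h1, -⟩ := hT'el x hx
            rw [meets_iff'] at hm ⊢
            simp only at hm ⊢
            omega
          · obtain ⟨h1, h2, h3⟩ := hUel x hx
            rw [meets_iff']
            simp only
            omega
      have hcardle := le_alphaF hgood
      rw [Finset.card_union_of_disjoint hdisjTU, hc', hUcard] at hcardle
      exact hcardle
  have hQFD : ∀ i : ℤ, s' ≤ i → alphaF Q i s = alphaF (F ∪ D) i s := by
    intro i hi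
    apply le_antisymm
    · refine alphaF_le fun T hT => le_alphaF ⟨?_, hT.2.1, hT.2.2⟩
      intro x hx
      have hxQ := hT.1 hx
      rcases hQdecomp x hxQ with h | h
      · exfalso
        have hm := hT.2.2 x hx
        rw [meets_iff'] at hm
        simp only at hm
        omega
      · exact h
    · exact alphaF_mono hFDQ i s
  have hQlow : ∀ i : ℤ, i ≤ s' → alphaF Q1 i s' + alphaF D s' s ≤ alphaF Q i s := by
    intro i hi
    obtain ⟨T', hT', hc'⟩ := exists_good Q1 i s'
    obtain ⟨W, hW, hcW⟩ := exists_good D s' s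
    have hT'el : ∀ x ∈ T', x ∈ Q ∧ x.1 < x.2 ∧ x.2 ≤ s' := by
      intro x hx
      have hmem := hT'.1 hx
      rw [hQ1eq] at hmem
      obtain ⟨hxQ, hx2⟩ := Finset.mem_filter.mp hmem
      exact ⟨hxQ, (hQel x hxQ).2.1, hx2⟩
    have hWel : ∀ x ∈ W, s' ≤ x.1 ∧ x.1 < x.2 ∧ x.2 ≤ s := fun x hx => hDel x (hW.1 hx)
    have hdisjTW : Disjoint T' W := by
      rw [Finset.disjoint_left]
      intro x hx1 hx2
      have h1 := (hT'el x hx1).2.2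
      have h2 := hWel x hx2
      omega
    have hgood : Good Q i s (T' ∪ W) := by
      refine ⟨Finset.union_subset (fun x hx => (hT'el x hx).1) ((hW.1).trans hDQ), ?_, ?_⟩
      · refine pairwise_union hT'.2.1 hW.2.1 ?_
        intro a ha b hb hm
        have h1 := (hT'el a ha).2.2
        have h2 := hWel b hb
        rw [meets_iff'] at hm
        omega
      · intro x hx
        rcases Finset.mem_union.mp hx with hx | hx
        · have hm := hT'.2.2 x hx
          rw [meets_iff'] at hm ⊢
          simp only at hm ⊢
          omega
        · have hm := hW.2.2 x hx
          rw [meets_iff'] at hm ⊢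
          simp only at hm ⊢
          omega
    have hcardle := le_alphaF hgood
    rw [Finset.card_union_of_disjoint hdisjTW, hc', hcW] at hcardle
    exact hcardle
  have hQup : 1 ≤ s' → ∀ i : ℤ, i < s' → alphaF Q i s ≤ alphaF Q1 i s' + alphaF D s' s := by
    intro hs1 i hi
    obtain ⟨T, hT, hcard⟩ := exists_good Q i s
    rw [← hcard]
    have hsplit1 := Finset.card_filter_add_card_filter_not
      (s := T) (p := fun x : ℤ × ℤ => x.2 ≤ s')
    set T1 := T.filter (fun x : ℤ × ℤ => x.2 ≤ s') with hT1def
    set Tr := T.filter (fun x : ℤ × ℤ => ¬ x.2 ≤ s') with hTrdef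
    have hsplit2 := Finset.card_filter_add_card_filter_not
      (s := Tr) (p := fun x : ℤ × ℤ => x.1 < s')
    set TF := Tr.filter (fun x : ℤ × ℤ => x.1 < s') with hTFdef
    set TD := Tr.filter (fun x : ℤ × ℤ => ¬ x.1 < s') with hTDdef
    have hT1mem : ∀ x ∈ T1, x ∈ T ∧ x ∈ Q ∧ x.1 < x.2 ∧ x.2 ≤ s' := by
      intro x hx
      obtain ⟨hxT, hx2⟩ := Finset.mem_filter.mp hx
      have hxQ := hT.1 hxT
      exact ⟨hxT, hxQ, (hQel x hxQ).2.1, hx2⟩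
    have hTFmem : ∀ x ∈ TF, x ∈ T ∧ x.1 < s' ∧ s' < x.2 ∧ x.1 < x.2 := by
      intro x hx
      obtain ⟨hxTr, hx1⟩ := Finset.mem_filter.mp hx
      obtain ⟨hxT, hx2⟩ := Finset.mem_filter.mp hxTr
      exact ⟨hxT, hx1, by omega, (hQel x (hT.1 hxT)).2.1⟩
    have hTDmem : ∀ x ∈ TD, x ∈ T ∧ s' ≤ x.1 ∧ s' < x.2 := by
      intro x hx
      obtain ⟨hxTr, hx1⟩ := Finset.mem_filter.mp hx
      obtain ⟨hxT, hx2⟩ := Finset.mem_filter.mp hxTr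
      have := (hQel x (hT.1 hxT)).2.1
      exact ⟨hxT, by omega, by omega⟩
    have hT1sub : T1 ⊆ Q1 := by
      intro x hx
      obtain ⟨-, hxQ, -, hx2⟩ := hT1mem x hx
      rw [hQ1eq]
      exact Finset.mem_filter.mpr ⟨hxQ, hx2⟩
    have hT1meets : ∀ x ∈ T1, Meets x (i, s') := by
      intro x hx
      obtain ⟨hxT, -, -, hx2⟩ := hT1mem x hx
      have hm := hT.2.2 x hxT
      rw [meets_iff'] at hm ⊢
      simp only at hm ⊢
      omega
    have hT1pw : ((T1 : Set (ℤ × ℤ))).Pairwise fun a b => ¬ Meets a b :=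
      hT.2.1.mono (fun x hx => Finset.mem_coe.mpr
        (Finset.filter_subset _ _ (Finset.mem_coe.mp hx)))
    have hTDcard : TD.card ≤ alphaF D s' s := by
      refine le_alphaF ⟨?_, ?_, ?_⟩
      · intro x hx
        obtain ⟨hxT, hx1, hx2⟩ := hTDmem x hx
        have hxQ := hT.1 hxT
        rw [← hD]
        exact Finset.mem_inter.mpr ⟨hxQ,
          Finset.mem_filter.mpr ⟨hQJ hxQ, hx1, (hQel x hxQ).2.2⟩⟩
      · exact hT.2.1.mono (fun x hx => Finset.mem_coe.mpr
          ((Finset.filter_subset _ _).trans (Finset.filter_subset _ _) (Finset.mem_coe.mp hx)))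
      · intro x hx
        obtain ⟨hxT, hx1, hx2⟩ := hTDmem x hx
        have := (hQel x (hT.1 hxT)).2.2
        have := (hQel x (hT.1 hxT)).2.1
        rw [meets_iff']
        simp only
        omega
    have hTFcard : TF.card ≤ 1 := by
      refine Finset.card_le_one.mpr fun a ha b hb => ?_
      by_contra hab
      obtain ⟨haT, ha1, ha2, ha3⟩ := hTFmem a ha
      obtain ⟨hbT, hb1, hb2, hb3⟩ := hTFmem b hb
      have hnm := hT.2.1 (Finset.mem_coe.mpr haT) (Finset.mem_coe.mpr hbT) hab
      simp only [meets_iff'] at hnm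
      omega
    rcases Nat.eq_zero_or_pos TF.card with hTF0 | hTFpos
    · have h1 : T1.card ≤ alphaF Q1 i s' := le_alphaF ⟨hT1sub, hT1pw, hT1meets⟩
      omega
    · obtain ⟨f, hfeq⟩ := Finset.card_eq_one.mp (le_antisymm hTFcard hTFpos)
      have hfTF : f ∈ TF := hfeq ▸ Finset.mem_singleton_self f
      obtain ⟨hfT, hf1, hf2, hf3⟩ := hTFmem f hfTF
      have bT1lt : ∀ x ∈ T1, x.2 < s' := by
        intro x hx
        obtain ⟨hxT, -, hxlt, hx2⟩ := hT1mem x hx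
        by_contra hc
        have hxf : x ≠ f := by
          intro he
          rw [he] at hx2
          omega
        have hnm := hT.2.1 (Finset.mem_coe.mpr hxT) (Finset.mem_coe.mpr hfT) hxf
        simp only [meets_iff'] at hnm
        omega
      have hnotmem : ((s' - 1, s') : ℤ × ℤ) ∉ T1 := by
        intro hc
        have := bT1lt _ hc
        simp at this
      have hQ1mem : ((s' - 1, s') : ℤ × ℤ) ∈ Q1 := by
        rw [hQ1eq]
        exact Finset.mem_filter.mpr ⟨hQunit hs1, le_refl _⟩
      have hgood : Good Q1 i s' (insert ((s' - 1, s') : ℤ × ℤ) T1) := by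
        refine ⟨Finset.insert_subset hQ1mem hT1sub, ?_, ?_⟩
        · rw [Finset.coe_insert]
          refine (haveI : Std.Symm (fun a b : ℤ × ℤ => ¬ Meets a b) := ⟨?_⟩; Set.pairwise_insert_of_symm) |>.mpr ⟨hT1pw, fun b hb hne => ?_⟩
          · intro x y hxy hm
            exact hxy (meets_symm hm)
          · have := bT1lt b (Finset.mem_coe.mp hb)
            rw [meets_iff']
            simp only
            omega
        · intro x hx
          rcases Finset.mem_insert.mp hx with hx | hx
          · subst hx
            rw [meets_iff']
            simp only
            omega
          · exact hT1meets x hx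
      have hcardins := le_alphaF hgood
      rw [Finset.card_insert_of_notMem hnotmem] at hcardins
      omega
  have hwle : alphaF D s' s ≤ alphaF (F ∪ D) s' s := alphaF_mono Finset.subset_union_right s' s
  have hPS : ∀ x ∈ P, x.1 < x.2 ∧ x.2 ≤ s := fun x hx => ⟨(hPel x hx).2.1, (hPel x hx).2.2⟩
  refine ⟨?_, ?_, ?_, ?_⟩
  · -- Goal 1 : p u = s - u
    intro u hu1 hu2
    obtain ⟨hud, huv⟩ := le_min_iff.mp hu2
    have hud' : (u : ℤ) ≤ s - s' := by omega
    have hkey : alphaF P (s - (u : ℤ)) s = u := by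
      apply le_antisymm
      · have := alphaF_le_slots hPS (s - (u : ℤ))
        omega
      · have := units_le_alphaF (P := P) (l := s - (u : ℤ)) (s := s)
          (fun t ht1 ht2 => hunitsP t (by omega) ht2)
        omega
    have hidx : idx v P u s = s - (u : ℤ) := by
      refine idx_eq (by omega) (by omega) (le_of_eq hkey.symm) (by omega) ?_
      intro j hj hjs
      have := alphaF_le_slots hPS j
      omega
    rw [hpe u (by omega), hidx]
  · -- Goal 2 : p u = p' (u - d)
    intro u hud huv
    have hpu : p u = idx v P u s := hpe u (by omega)
    have hp'u : p' (u - (s - s').toNat) = idx v P1 (u - (s - s').toNat) s' :=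
      hpe' (u - (s - s').toNat) (by omega)
    rw [hpu, hp'u]
    have hudd : u - (s - s').toNat = u - d := by rw [hddef]
    rw [hudd]
    by_cases hex : ∃ i : ℤ, 0 ≤ i ∧ i ≤ s' ∧ u - d ≤ alphaF P1 i s'
    · obtain ⟨i₁, hi₁0, hi₁s, hi₁α⟩ := hex
      obtain ⟨i₀, hi₀1, hi₀2, hi₀3, hi₀4⟩ := exists_crit (by omega) hi₁s hi₁α
      have hidx' : idx v P1 (u - d) s' = i₀ :=
        idx_eq (by omega) (by omega) (le_of_eq hi₀3.symm) (by rw [hi₀3]; omega)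
          (fun j hj _ => hi₀4 j hj)
      have hαP : alphaF P i₀ s = u := by
        rw [hPkey i₀ (by omega), hi₀3]
        omega
      have hidx : idx v P u s = i₀ := by
        refine idx_eq (by omega) (by omega) (le_of_eq hαP.symm) (by rw [hαP]; omega) ?_
        intro j hj hjs
        rcases le_or_gt j s' with h | h
        · rw [hPkey j h]
          have := hi₀4 j hj
          omega
        · have := alphaF_le_slots hPS j
          omega
      rw [hidx, hidx']
    · push_neg at hex
      have h1 : idx v P1 (u - d) s' = -1 :=
        idx_neg (fun j hj hjs => by have := hex j hj hjs; omega)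
      have h2 : idx v P u s = -1 := by
        refine idx_neg fun j hj hjs => ?_
        rcases le_or_gt j s' with h | h
        · rw [hPkey j h]
          have := hex j hj h
          omega
        · have := alphaF_le_slots hPS j
          omega
      rw [h1, h2]
  · -- Goal 3 : q u = idx v (F ∪ D) u s
    intro u hu1 hu2
    rw [← hDdef] at hu2 ⊢
    obtain ⟨huw, huv⟩ := le_min_iff.mp hu2
    obtain ⟨i₀, hi₀1, hi₀2, hi₀3, hi₀4⟩ := exists_crit hu1 (le_of_lt hss) huw
    have hidxFD : idx v (F ∪ D) u s = i₀ :=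
      idx_eq (by omega) (by omega) (le_of_eq hi₀3.symm) (by rw [hi₀3]; omega)
        (fun j hj _ => hi₀4 j hj)
    have hidxQ : idx v Q u s = i₀ := by
      refine idx_eq (by omega) (by omega) ?_ ?_ ?_
      · rw [hQFD i₀ hi₀1, hi₀3]
      · rw [hQFD i₀ hi₀1, hi₀3]; omega
      · intro j hj hjs
        rw [hQFD j (by omega)]
        exact hi₀4 j hj
    rw [hqe u (by omega), hidxQ, hidxFD]
  · -- Goal 4 : q u = q' (u - w)
    intro u hw' huv
    rw [← hDdef] at hw' ⊢
    have hqu : q u = idx v Q u s := hqe u (by omega)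
    have hq'u : q' (u - alphaF D s' s) = idx v Q1 (u - alphaF D s' s) s' :=
      hqe' (u - alphaF D s' s) (by omega)
    rw [hqu, hq'u]
    have hwu : alphaF D s' s < u := by
      have := hwle
      omega
    by_cases hs10 : 1 ≤ s'
    · by_cases hex : ∃ i : ℤ, 0 ≤ i ∧ i ≤ s' ∧ u - alphaF D s' s ≤ alphaF Q1 i s'
      · obtain ⟨i₁, hi₁0, hi₁s, hi₁α⟩ := hex
        obtain ⟨i₀, hi₀1, hi₀2, hi₀3, hi₀4⟩ := exists_crit (by omega) hi₁s hi₁α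
        have hidx' : idx v Q1 (u - alphaF D s' s) s' = i₀ :=
          idx_eq (by omega) (by omega) (le_of_eq hi₀3.symm) (by rw [hi₀3]; omega)
            (fun j hj _ => hi₀4 j hj)
        have hαQ : alphaF Q i₀ s = u := by
          have hlow := hQlow i₀ (by omega)
          have hup := hQup hs10 i₀ (by omega)
          rw [hi₀3] at hlow hup
          omega
        have hidx : idx v Q u s = i₀ := by
          refine idx_eq (by omega) (by omega) (le_of_eq hαQ.symm) (by rw [hαQ]; omega) ?_
          intro j hj hjs
          rcases lt_or_ge j s' with h | h
          · have hup := hQup hs10 j h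
            have := hi₀4 j hj
            omega
          · rw [hQFD j h]
            have := alphaF_anti (S := F ∪ D) (r := s) h
            omega
        rw [hidx, hidx']
      · push_neg at hex
        have h1 : idx v Q1 (u - alphaF D s' s) s' = -1 :=
          idx_neg (fun j hj hjs => by have := hex j hj hjs; omega)
        have h2 : idx v Q u s = -1 := by
          refine idx_neg fun j hj hjs => ?_
          rcases lt_or_ge j s' with h | h
          · have hup := hQup hs10 j h
            have := hex j hj (by omega)
            omega
          · rw [hQFD j h]
            have := alphaF_anti (S := F ∪ D) (r := s) h
            omega
        rw [h1, h2]
    · have hs'0 : s' = 0 := by omega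
      have hQ1empty : Q1 = ∅ := by
        refine Finset.eq_empty_of_forall_notMem fun x hx => ?_
        rw [hQ1eq] at hx
        obtain ⟨hxQ, hx2⟩ := Finset.mem_filter.mp hx
        have := (hQel x hxQ).1
        have := (hQel x hxQ).2.1
        omega
      have h1 : idx v Q1 (u - alphaF D s' s) s' = -1 := by
        refine idx_neg fun j hj hjs => ?_
        rw [hQ1empty, alphaF_empty]
        omega
      have h2 : idx v Q u s = -1 := by
        refine idx_neg fun j hj hjs => ?_
        rw [hQFD j (by omega)]
        have := alphaF_anti (S := F ∪ D) (r := s) (show s' ≤ j by omega)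
        omega
      rw [h1, h2]
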